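/- arXiv:2604.20274 — 3 statements merged into one kernel-verified Lean document; each statement's English description precedes it below -/
import Mathlib

section
/- Define the per-node contribution t_v(d) = ln(d/(d_min - 0.5)) if d ≥ d_min and t_v(d) = 0 otherwise, for integer degrees d ≥ 0 and integer d_min ≥ 1. Then for any integer d ≥ 0, |t_v(d+1) - t_v(d)| ≤ ln((d_min+1)/d_min). -/
/-! Below the threshold both values vanish. In the tail the common denominator `d_min - 1/2`
cancels, leaving `log ((d + 1) / d)`, which decreases in `d`. At the crossing `d + 1 = d_min` the
jump `log (d_min / (d_min - 1/2))` is at most `log ((d_min + 1) / d_min)`, which after clearing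
denominators is `d_min ≥ 1`. -/

open Real

lemma log_div_sub_log_div_of_ne_zero {x y c : ℝ} (hx : x ≠ 0) (hy : y ≠ 0) (hc : c ≠ 0) :
    log (x / c) - log (y / c) = log (x / y) := by
  rw [← log_div (div_ne_zero hx hc) (div_ne_zero hy hc), div_div_div_cancel_right₀ hc]

lemma log_succ_div_le_of_le {m x : ℝ} (hm : 0 < m) (hmx : m ≤ x) :
    log ((x + 1) / x) ≤ log ((m + 1) / m) := by
  have hx : 0 < x := hm.trans_le hmx
  apply log_le_log (by positivity)
  rw [div_le_div_iff₀ hx hm]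
  linarith

lemma log_div_sub_half_le_log_succ_div {m : ℝ} (hm : 1 ≤ m) :
    log (m / (m - 0.5)) ≤ log ((m + 1) / m) := by
  have hden : 0 < m - 0.5 := by linarith
  apply log_le_log (by positivity)
  rw [div_le_div_iff₀ hden (by linarith)]
  nlinarith

theorem stmt_3 (d_min : ℕ) (h : 1 ≤ d_min)
    (t : ℕ → ℝ)
    (ht : ∀ d : ℕ, t d = if d_min ≤ d then Real.log ((d : ℝ) / ((d_min : ℝ) - 0.5)) else 0)
    (d : ℕ) :
    |t (d + 1) - t d| ≤ Real.log (((d_min : ℝ) + 1) / (d_min : ℝ)) := by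
  have hm : (1 : ℝ) ≤ d_min := by exact_mod_cast h
  have hm0 : (0 : ℝ) < d_min := by linarith
  rw [ht, ht]
  rcases lt_trichotomy (d + 1) d_min with hbelow | hcross | htail
  · rw [if_neg (by omega), if_neg (by omega), sub_zero, abs_zero]
    exact log_nonneg ((one_le_div hm0).mpr (by linarith))
  · rw [if_pos hcross.ge, if_neg (by omega), sub_zero, hcross,
      abs_of_nonneg (log_nonneg ((one_le_div (by linarith)).mpr (by linarith)))]
    exact log_div_sub_half_le_log_succ_div hm
  · have hd : (d_min : ℝ) ≤ d := by exact_mod_cast Nat.lt_succ_iff.mp htail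
    rw [if_pos htail.le, if_pos (Nat.lt_succ_iff.mp htail), Nat.cast_succ,
      log_div_sub_log_div_of_ne_zero (by linarith) (by linarith) (by linarith),
      abs_of_nonneg (log_nonneg ((one_le_div (by linarith)).mpr (by linarith)))]
    exact log_succ_div_le_of_le hm0 hd
end

section
/- Suppose N ≥ 1 observations d_1,…,d_N are integers in [d_min, d_max] with d_min ≥ 1, and T = Σ ln d_i. If (1/N)·T is strictly between ln d_min and ln d_max (equivalently, not all d_i equal d_min and not all equal d_max), then the function ℓ(α) = −αT − N·ln Z(α), with Z(α) = Σ_{d=d_min}^{d_max} d^{−α}, satisfies ℓ(α) → −∞ as α → +∞ and as α → −∞. -/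
theorem stmt_12 (d_min d_max : ℕ) (h1 : 1 ≤ d_min) (h2 : d_min ≤ d_max)
    (N : ℕ) (hN : 1 ≤ N) (d : Fin N → ℕ) (hd : ∀ i, d_min ≤ d i ∧ d i ≤ d_max)
    (T : ℝ) (hT : T = ∑ i, Real.log (d i))
    (hlow : Real.log d_min < T / N) (hhigh : T / N < Real.log d_max) :
    Filter.Tendsto
      (fun α : ℝ => -α * T - N * Real.log (∑ k ∈ Finset.Icc d_min d_max, (k : ℝ) ^ (-α)))
      Filter.atTop Filter.atBot ∧
    Filter.Tendsto
      (fun α : ℝ => -α * T - N * Real.log (∑ k ∈ Finset.Icc d_min d_max, (k : ℝ) ^ (-α)))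
      Filter.atBot Filter.atBot := by
  have hNpos : (0:ℝ) < N := by exact_mod_cast hN
  have hbound : ∀ m : ℕ, m ∈ Finset.Icc d_min d_max → ∀ α : ℝ,
      -α * T - N * Real.log (∑ k ∈ Finset.Icc d_min d_max, (k : ℝ) ^ (-α))
        ≤ α * ((N : ℝ) * Real.log m - T) := by
    intro m hm α
    have hm1 : 1 ≤ m := le_trans h1 (Finset.mem_Icc.mp hm).1
    have hmpos : (0:ℝ) < (m:ℝ) := by exact_mod_cast hm1
    have hterm : (m:ℝ) ^ (-α) ≤ ∑ k ∈ Finset.Icc d_min d_max, (k : ℝ) ^ (-α) := by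
      apply Finset.single_le_sum (f := fun k : ℕ => (k:ℝ) ^ (-α)) _ hm
      intro k hk
      have : (0:ℝ) < (k:ℝ) := by
        exact_mod_cast lt_of_lt_of_le Nat.zero_lt_one (le_trans h1 (Finset.mem_Icc.mp hk).1)
      positivity
    have hlog : Real.log ((m:ℝ) ^ (-α)) ≤
        Real.log (∑ k ∈ Finset.Icc d_min d_max, (k : ℝ) ^ (-α)) :=
      Real.log_le_log (Real.rpow_pos_of_pos hmpos _) hterm
    rw [Real.log_rpow hmpos] at hlog
    nlinarith [hNpos]
  have hc1 : (N:ℝ) * Real.log d_min - T < 0 := by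
    have := (lt_div_iff₀ hNpos).mp hlow
    nlinarith
  have hc2 : (0:ℝ) < (N:ℝ) * Real.log d_max - T := by
    have := (div_lt_iff₀ hNpos).mp hhigh
    nlinarith
  constructor
  · exact Filter.tendsto_atBot_mono
      (hbound d_min (Finset.mem_Icc.mpr ⟨le_refl _, h2⟩))
      (Filter.Tendsto.atTop_mul_const_of_neg hc1 Filter.tendsto_id)
  · exact Filter.tendsto_atBot_mono
      (hbound d_max (Finset.mem_Icc.mpr ⟨h2, le_refl _⟩))
      (Filter.Tendsto.atBot_mul_const hc2 Filter.tendsto_id)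
end

section
/- Let X be a real random variable with the Laplace distribution of scale b > 0 centered at 0, i.e., density (1/(2b))·exp(−|x|/b). For any real function f on databases with global sensitivity Δ (meaning |f(D) − f(D')| ≤ Δ for all neighboring D, D'), the mechanism M(D) = f(D) + X with b = Δ/ε satisfies, for every measurable set S and all neighboring D, D': P(M(D) ∈ S) ≤ e^{ε}·P(M(D') ∈ S). -/
/-!
Moving the centre from `μ'` to `μ` changes `|x - μ|` by at most `|μ - μ'|`, so the Laplace
density centred at `μ` is pointwise at most `exp (|μ - μ'| / b)` times the one centred at `μ'`.
Integrating over `S` keeps this bound, and `|f d - f d'| / b ≤ Δ / b = ε`.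
-/

open MeasureTheory Real

noncomputable def laplacePDFReal (μ b x : ℝ) : ℝ :=
  1 / (2 * b) * exp (-|x - μ| / b)

lemma laplacePDFReal_nonneg {b : ℝ} (hb : 0 ≤ b) (μ x : ℝ) : 0 ≤ laplacePDFReal μ b x := by
  unfold laplacePDFReal
  positivity

lemma integral_exp_neg_abs_div {b : ℝ} (hb : 0 < b) : ∫ x, exp (-|x| / b) = 2 * b := by
  rw [integral_comp_abs (f := fun x => exp (-x / b))]
  simp_rw [neg_div, div_eq_inv_mul, ← neg_mul]
  rw [integral_exp_mul_Ioi (neg_lt_zero.mpr (inv_pos.mpr hb))]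
  field_simp
  simp

lemma integrable_laplacePDFReal (μ : ℝ) {b : ℝ} (hb : 0 < b) :
    Integrable (laplacePDFReal μ b) := by
  have h : Integrable fun x => exp (-|x| / b) :=
    .of_integral_ne_zero (by rw [integral_exp_neg_abs_div hb]; positivity)
  exact (h.comp_sub_right μ).const_mul _

lemma laplacePDFReal_le_exp_mul {b : ℝ} (hb : 0 ≤ b) (μ μ' x : ℝ) :
    laplacePDFReal μ b x ≤ exp (|μ - μ'| / b) * laplacePDFReal μ' b x := by
  unfold laplacePDFReal
  rw [mul_left_comm, ← exp_add]
  gcongr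
  have : |x - μ'| ≤ |x - μ| + |μ - μ'| := abs_sub_le x μ μ'
  rw [← add_div]
  gcongr
  linarith

lemma setIntegral_laplacePDFReal_le {b : ℝ} (hb : 0 < b) (S : Set ℝ) (μ μ' : ℝ) :
    ∫ x in S, laplacePDFReal μ b x ≤ exp (|μ - μ'| / b) * ∫ x in S, laplacePDFReal μ' b x := by
  rw [← integral_const_mul]
  exact setIntegral_mono (integrable_laplacePDFReal μ hb).integrableOn
    ((integrable_laplacePDFReal μ' hb).const_mul _).integrableOn
    (laplacePDFReal_le_exp_mul hb.le μ μ')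

theorem stmt_15_general {D : Type*} (Neigh : D → D → Prop) (f : D → ℝ)
    (Δ ε : ℝ) (hΔ : 0 < Δ) (hε : 0 < ε)
    (hsens : ∀ d d', Neigh d d' → |f d - f d'| ≤ Δ)
    (b : ℝ) (hb : b = Δ / ε)
    (S : Set ℝ)
    (d d' : D) (hn : Neigh d d') :
    (∫ x in S, (1 / (2 * b)) * Real.exp (-|x - f d| / b)) ≤
      Real.exp ε * ∫ x in S, (1 / (2 * b)) * Real.exp (-|x - f d'| / b) := by
  have hb_pos : 0 < b := hb ▸ div_pos hΔ hε
  have hε_eq : ε = Δ / b := by rw [hb]; field_simp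
  calc ∫ x in S, laplacePDFReal (f d) b x
      ≤ exp (|f d - f d'| / b) * ∫ x in S, laplacePDFReal (f d') b x :=
        setIntegral_laplacePDFReal_le hb_pos S (f d) (f d')
    _ ≤ exp ε * ∫ x in S, laplacePDFReal (f d') b x := by
        have : 0 ≤ ∫ x in S, laplacePDFReal (f d') b x :=
          integral_nonneg (laplacePDFReal_nonneg hb_pos.le (f d'))
        rw [hε_eq]
        gcongr
        exact hsens d d' hn

theorem stmt_15 {D : Type*} (Neigh : D → D → Prop) (f : D → ℝ)
    (Δ ε : ℝ) (hΔ : 0 < Δ) (hε : 0 < ε)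
    (hsens : ∀ d d', Neigh d d' → |f d - f d'| ≤ Δ)
    (b : ℝ) (hb : b = Δ / ε)
    (S : Set ℝ) (hS : MeasurableSet S)
    (d d' : D) (hn : Neigh d d') :
    (∫ x in S, (1 / (2 * b)) * Real.exp (-|x - f d| / b)) ≤
      Real.exp ε * ∫ x in S, (1 / (2 * b)) * Real.exp (-|x - f d'| / b) :=
  stmt_15_general Neigh f Δ ε hΔ hε hsens b hb S d d' hn
end
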